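/- For every ξ ∈ P^+, the subspaces 𝔘_{[≥ξ]} = ⊕_{η≥ξ} 𝔘_{[η]} and 𝔘_{[>ξ]} = ⊕_{η>ξ} 𝔘_{[η]} are two-sided ideals of 𝔘 spanned by canonical basis elements. -/

import Mathlib

/-- For every ξ ∈ P⁺, the subspaces
𝔘_{[≥ξ]} = span{G(b) : comp b ≥ ξ} and 𝔘_{[>ξ]} = span{G(b) : comp b > ξ}
(spanned by canonical basis elements by construction) are two-sided ideals of 𝔘.
Here comp b is the highest weight of the connected component containing b, and
`hchar` is the characterization: x ∈ 𝔘_{[≥ξ]} iff every η with x·V(η) ≠ 0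
satisfies η ≥ ξ (and similarly for the strict version). -/
theorem cells_are_two_sided_ideals
    {k A : Type*} [Field k] [Ring A] [Algebra k A]
    {Bfrak Pplus : Type*} [PartialOrder Pplus]
    (V : Pplus → Type) [∀ l, AddCommGroup (V l)] [∀ l, Module k (V l)]
    (ρ : ∀ l, A →ₐ[k] Module.End k (V l))
    (G : Module.Basis Bfrak k A)
    (comp : Bfrak → Pplus)
    (hchar : ∀ (ξ : Pplus) (x : A),
      x ∈ Submodule.span k (G '' {b : Bfrak | ξ ≤ comp b}) ↔
      (∀ η : Pplus, ρ η x ≠ 0 → ξ ≤ η))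
    (hchar' : ∀ (ξ : Pplus) (x : A),
      x ∈ Submodule.span k (G '' {b : Bfrak | ξ < comp b}) ↔
      (∀ η : Pplus, ρ η x ≠ 0 → ξ < η)) :
    ∀ ξ : Pplus,
      (∃ J : TwoSidedIdeal A,
        (J : Set A) = (Submodule.span k (G '' {b : Bfrak | ξ ≤ comp b}) : Submodule k A)) ∧
      (∃ J : TwoSidedIdeal A,
        (J : Set A) = (Submodule.span k (G '' {b : Bfrak | ξ < comp b}) : Submodule k A)) := by
  intro ξ
  constructor
  · refine ⟨TwoSidedIdeal.mk' (Submodule.span k (G '' {b : Bfrak | ξ ≤ comp b}) : Submodule k A)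
      (Submodule.zero_mem _) (fun hx hy => Submodule.add_mem _ hx hy)
      (fun hx => Submodule.neg_mem _ hx) ?_ ?_, TwoSidedIdeal.coe_mk' _ _ _ _ _ _⟩
    · intro x y hy
      rw [SetLike.mem_coe, hchar] at hy ⊢
      intro η h
      refine hy η (fun h0 => h ?_)
      rw [map_mul, h0, mul_zero]
    · intro x y hx
      rw [SetLike.mem_coe, hchar] at hx ⊢
      intro η h
      refine hx η (fun h0 => h ?_)
      rw [map_mul, h0, zero_mul]
  · refine ⟨TwoSidedIdeal.mk' (Submodule.span k (G '' {b : Bfrak | ξ < comp b}) : Submodule k A)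
      (Submodule.zero_mem _) (fun hx hy => Submodule.add_mem _ hx hy)
      (fun hx => Submodule.neg_mem _ hx) ?_ ?_, TwoSidedIdeal.coe_mk' _ _ _ _ _ _⟩
    · intro x y hy
      rw [SetLike.mem_coe, hchar'] at hy ⊢
      intro η h
      refine hy η (fun h0 => h ?_)
      rw [map_mul, h0, mul_zero]
    · intro x y hx
      rw [SetLike.mem_coe, hchar'] at hx ⊢
      intro η h
      refine hx η (fun h0 => h ?_)
      rw [map_mul, h0, zero_mul]
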